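/- arXiv:1102.3199 — 2 statements merged into one kernel-verified Lean document; each statement's English description precedes it below -/
import Mathlib

section
/- Let X be a nonempty compact Hausdorff space and let (X; f_1, …, f_N) be a point-fibred iterated function system on X. Then there exists a unique nonempty compact set A ⊆ X such that A = f_1(A) ∪ f_2(A) ∪ ⋯ ∪ f_N(A). -/
/-- `seqComp f σ k = f (σ 0) ∘ f (σ 1) ∘ ⋯ ∘ f (σ (k-1))`. -/
def seqComp {X : Type*} {N : ℕ} (f : Fin N → X → X) (σ : ℕ → Fin N) : ℕ → X → X
  | 0 => id
  | k + 1 => seqComp f σ k ∘ f (σ k)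

section aux

variable {X : Type*} {N : ℕ} (f : Fin N → X → X)

/-- prepend a symbol to a code. -/
def seqCons (i : Fin N) (σ : ℕ → Fin N) : ℕ → Fin N :=
  fun n => Nat.casesOn n i σ

lemma seqComp_congr {σ τ : ℕ → Fin N} (k : ℕ) (h : ∀ j < k, σ j = τ j) :
    seqComp f σ k = seqComp f τ k := by
  induction k with
  | zero => rfl
  | succ k ih =>
    show seqComp f σ k ∘ f (σ k) = seqComp f τ k ∘ f (τ k)
    rw [ih (fun j hj => h j (Nat.lt_succ_of_lt hj)), h k (Nat.lt_succ_self k)]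

lemma seqComp_cons (i : Fin N) (σ : ℕ → Fin N) (k : ℕ) :
    seqComp f (seqCons i σ) (k + 1) = f i ∘ seqComp f σ k := by
  induction k with
  | zero => rfl
  | succ k ih =>
    show seqComp f (seqCons i σ) (k + 1) ∘ f (seqCons i σ (k + 1)) = _
    rw [ih]
    rfl

lemma continuous_seqComp [TopologicalSpace X] (hf : ∀ i, Continuous (f i))
    (σ : ℕ → Fin N) (k : ℕ) : Continuous (seqComp f σ k) := by
  induction k with
  | zero => exact continuous_id
  | succ k ih => exact ih.comp (hf (σ k))

lemma seqComp_antitone (σ : ℕ → Fin N) (k : ℕ) :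
    seqComp f σ (k + 1) '' Set.univ ⊆ seqComp f σ k '' Set.univ := by
  rintro x ⟨y, -, rfl⟩
  exact ⟨f (σ k) y, trivial, rfl⟩

end aux

/-- A point-fibred IFS on a nonempty compact Hausdorff space has a
unique nonempty compact set `A ⊆ X` with `A = f_1(A) ∪ ⋯ ∪ f_N(A)`. -/
theorem exists_unique_invariant_set
    {X : Type*} [TopologicalSpace X] [CompactSpace X] [T2Space X] [Nonempty X]
    {N : ℕ} (hN : 0 < N) (f : Fin N → X → X) (hf : ∀ i, Continuous (f i))
    (π : (ℕ → Fin N) → X)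
    (hπ : ∀ σ : ℕ → Fin N,
      (⋂ k : ℕ, seqComp f σ k '' (Set.univ : Set X)) = {π σ}) :
    ∃! A : Set X, A.Nonempty ∧ IsCompact A ∧ A = ⋃ i, f i '' A := by
  have : NeZero N := ⟨hN.ne'⟩
  set K : (ℕ → Fin N) → ℕ → Set X := fun σ k => seqComp f σ k '' Set.univ with hK
  have hKc : ∀ σ k, IsCompact (K σ k) := fun σ k =>
    isCompact_univ.image (continuous_seqComp f hf σ k)
  have hKcl : ∀ σ k, IsClosed (K σ k) := fun σ k => (hKc σ k).isClosed
  have hπmem : ∀ σ k, π σ ∈ K σ k := by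
    intro σ k
    have := (hπ σ).symm ▸ (Set.mem_singleton (π σ))
    exact Set.mem_iInter.1 this k
  -- π (cons i σ) = f i (π σ)
  have hπcons : ∀ (i : Fin N) (σ : ℕ → Fin N), π (seqCons i σ) = f i (π σ) := by
    intro i σ
    have hmem : f i (π σ) ∈ ⋂ k, K (seqCons i σ) k := by
      refine Set.mem_iInter.2 fun k => ?_
      cases k with
      | zero => exact ⟨f i (π σ), trivial, rfl⟩
      | succ k =>
        obtain ⟨y, -, hy⟩ := hπmem σ k
        exact ⟨y, trivial, by rw [seqComp_cons]; simp [hy]⟩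
    rw [hπ (seqCons i σ)] at hmem
    exact hmem.symm
  -- continuity of π
  have hπcont : Continuous π := by
    rw [continuous_iff_continuousAt]
    intro σ
    rw [ContinuousAt, Filter.tendsto_def]
    intro U hU
    obtain ⟨V, hVU, hVo, hVmem⟩ := mem_nhds_iff.1 hU
    -- some K σ k ⊆ V
    have hsub : ∃ k, K σ k ⊆ V := by
      by_contra h
      push_neg at h
      have hne : ∀ k, (K σ k \ V).Nonempty := by
        intro k
        obtain ⟨x, hx, hxV⟩ := Set.not_subset.1 (h k)
        exact ⟨x, hx, hxV⟩
      have := IsCompact.nonempty_iInter_of_sequence_nonempty_isCompact_isClosed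
        (fun k => K σ k \ V)
        (fun k => Set.diff_subset_diff_left (seqComp_antitone f σ k))
        hne ((hKc σ 0).diff hVo)
        (fun k => (hKcl σ k).sdiff hVo)
      obtain ⟨x, hx⟩ := this
      have hx1 : x ∈ ⋂ k, K σ k := Set.mem_iInter.2 fun k => (Set.mem_iInter.1 hx k).1
      rw [hπ σ] at hx1
      have := (Set.mem_iInter.1 hx 0).2
      exact this (hx1 ▸ hVmem)
    obtain ⟨k, hk⟩ := hsub
    have hopen : IsOpen {τ : ℕ → Fin N | ∀ j < k, τ j = σ j} := by
      have : {τ : ℕ → Fin N | ∀ j < k, τ j = σ j} =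
          ⋂ j ∈ Finset.range k, (fun τ : ℕ → Fin N => τ j) ⁻¹' {σ j} := by
        ext τ; simp [Set.mem_iInter]
      rw [this]
      exact isOpen_biInter_finset fun j _ =>
        (continuous_apply j).isOpen_preimage _ (isOpen_discrete _)
    refine Filter.mem_of_superset (hopen.mem_nhds (fun j _ => rfl)) ?_
    intro τ hτ
    show π τ ∈ U
    have : seqComp f τ k = seqComp f σ k := seqComp_congr f k hτ
    have hmem : π τ ∈ seqComp f σ k '' Set.univ := by
      have h1 := hπmem τ k
      show π τ ∈ seqComp f σ k '' Set.univ
      rwa [← this]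
    exact hVU (hk hmem)
  refine ⟨Set.range π, ⟨Set.range_nonempty π, isCompact_range hπcont, ?_⟩, ?_⟩
  · -- invariance
    apply Set.Subset.antisymm
    · rintro x ⟨σ, rfl⟩
      have hσ : σ = seqCons (σ 0) (fun n => σ (n + 1)) := by
        funext n; cases n <;> rfl
      refine Set.mem_iUnion.2 ⟨σ 0, π (fun n => σ (n + 1)), ⟨_, rfl⟩, ?_⟩
      rw [← hπcons (σ 0) (fun n => σ (n + 1)), ← hσ]
    · rintro x hx
      obtain ⟨i, y, ⟨σ, rfl⟩, rfl⟩ := Set.mem_iUnion.1 hx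
      exact ⟨seqCons i σ, hπcons i σ⟩
  · -- uniqueness
    rintro B ⟨⟨b0, hb0⟩, hBc, hBinv⟩
    have hstep : ∀ y ∈ B, ∃ i : Fin N, ∃ z ∈ B, f i z = y := by
      intro y hy
      rw [hBinv] at hy
      obtain ⟨i, z, hz, hzy⟩ := Set.mem_iUnion.1 hy
      exact ⟨i, z, hz, hzy⟩
    have hfB : ∀ i : Fin N, f i '' B ⊆ B := by
      intro i x hx
      rw [hBinv]
      exact Set.mem_iUnion.2 ⟨i, hx⟩
    apply Set.Subset.antisymm
    · -- B ⊆ range π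
      intro x hx
      -- build a code
      have : ∃ s : ℕ → {y : X // y ∈ B}, ∃ σ : ℕ → Fin N,
          s 0 = ⟨x, hx⟩ ∧ ∀ k, f (σ k) (s (k + 1)) = s k := by
        choose g z hz hgz using hstep
        let step : {y : X // y ∈ B} → {y : X // y ∈ B} :=
          fun y => ⟨z y.1 y.2, hz y.1 y.2⟩
        refine ⟨fun k => step^[k] ⟨x, hx⟩, fun k => g (step^[k] ⟨x, hx⟩).1
          (step^[k] ⟨x, hx⟩).2, rfl, fun k => ?_⟩
        have hit : step^[k + 1] (⟨x, hx⟩ : {y : X // y ∈ B}) =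
            step (step^[k] ⟨x, hx⟩) := Function.iterate_succ_apply' step k _
        simp only [hit]
        exact hgz _ _
      obtain ⟨s, σ, hs0, hs⟩ := this
      have hxk : ∀ k, seqComp f σ k (s k) = x := by
        intro k
        induction k with
        | zero => simp [seqComp, hs0]
        | succ k ih =>
          show seqComp f σ k (f (σ k) (s (k + 1))) = x
          rw [hs k, ih]
      have hxmem : x ∈ ⋂ k, K σ k :=
        Set.mem_iInter.2 fun k => ⟨s k, trivial, hxk k⟩
      rw [hπ σ] at hxmem
      exact ⟨σ, hxmem.symm⟩
    · -- range π ⊆ B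
      rintro x ⟨σ, rfl⟩
      set L : ℕ → Set X := fun k => seqComp f σ k '' B with hL
      have hLsub : ∀ k, L (k + 1) ⊆ L k := by
        rintro k x ⟨y, hy, rfl⟩
        exact ⟨f (σ k) y, hfB (σ k) ⟨y, hy, rfl⟩, rfl⟩
      have hLc : ∀ k, IsCompact (L k) := fun k =>
        hBc.image (continuous_seqComp f hf σ k)
      have hLn : ∀ k, (L k).Nonempty := fun k => ⟨_, b0, hb0, rfl⟩
      have := IsCompact.nonempty_iInter_of_sequence_nonempty_isCompact_isClosed
        L hLsub hLn (hLc 0) (fun k => (hLc k).isClosed)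
      obtain ⟨y, hy⟩ := this
      have hyK : y ∈ ⋂ k, K σ k := Set.mem_iInter.2 fun k => by
        obtain ⟨z, -, rfl⟩ := Set.mem_iInter.1 hy k
        exact ⟨z, trivial, rfl⟩
      rw [hπ σ] at hyK
      obtain ⟨zz, hzz, hzy⟩ := Set.mem_iInter.1 hy 0
      rw [← hyK, ← hzy]
      exact hzz
end

section
/- Let (X; f_1, …, f_N) be an injective point-fibred iterated function system on a nonempty compact Hausdorff space X in which each f_i is also an open map, with attractor A, mask {M_1, …, M_N}, masked dynamical system T : A → A, and masked section τ : A → I^∞ (the itinerary map). Then τ is continuous at a point x ∈ A if and only if T^{k-1}(x) lies in the interior, relative to the subspace A, of M_{τ(x)_k} for every k = 1, 2, 3, …. -/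
open Topology Filter

lemma seqComp_succ' {X : Type*} {N : ℕ} (f : Fin N → X → X) (σ : ℕ → Fin N) (k : ℕ) :
    seqComp f σ (k + 1) = f (σ 0) ∘ seqComp f (fun n => σ (n + 1)) k := by
  induction k with
  | zero => rfl
  | succ k ih =>
    show seqComp f σ (k + 1) ∘ f (σ (k + 1)) = _
    rw [ih]
    rfl

lemma seqComp_continuous {X : Type*} [TopologicalSpace X] {N : ℕ} {f : Fin N → X → X}
    (hf : ∀ i, Continuous (f i)) (σ : ℕ → Fin N) (k : ℕ) :
    Continuous (seqComp f σ k) := by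
  induction k with
  | zero => exact continuous_id
  | succ k ih => exact ih.comp (hf (σ k))

/-- For an injective and open point-fibred IFS with attractor
`A = π(I^∞)`, mask `{M_i}`, masked dynamical system `T`, and masked section
(itinerary map) `itin : A → I^∞`, the section `itin` is continuous at `x ∈ A`
(as a map on `A`) if and only if for every `k`, the point `T^k x` lies in the
interior of `M_{itin x k}` relative to `A` (i.e. there is an open `U ∋ T^k x`
with `U ∩ A ⊆ M_{itin x k}`). -/
theorem masked_section_continuousWithinAt_iff
    {X : Type*} [TopologicalSpace X] [CompactSpace X] [T2Space X] [Nonempty X]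
    {N : ℕ} (hN : 0 < N) (f : Fin N → X → X) (hf : ∀ i, Continuous (f i))
    (hinj : ∀ i, Function.Injective (f i))
    (hopen : ∀ i, IsOpenMap (f i))
    (π : (ℕ → Fin N) → X)
    (hπ : ∀ σ : ℕ → Fin N,
      (⋂ k : ℕ, seqComp f σ k '' (Set.univ : Set X)) = {π σ})
    (M : Fin N → Set X)
    (hMsub : ∀ i, M i ⊆ f i '' Set.range π)
    (hMdisj : ∀ i j, i ≠ j → Disjoint (M i) (M j))
    (hMcover : ⋃ i, M i = Set.range π)
    (T : X → X) (hT : ∀ i, ∀ x ∈ M i, f i (T x) = x)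
    (itin : X → ℕ → Fin N)
    (hitin : ∀ x ∈ Set.range π, ∀ k : ℕ, T^[k] x ∈ M (itin x k))
    (x : X) (hx : x ∈ Set.range π) :
    ContinuousWithinAt itin (Set.range π) x ↔
      ∀ k : ℕ, ∃ U : Set X, IsOpen U ∧ T^[k] x ∈ U ∧
        U ∩ Set.range π ⊆ M (itin x k) := by
  -- π σ belongs to every level of the nested intersection
  have πmem : ∀ σ : ℕ → Fin N, ∀ k : ℕ, π σ ∈ seqComp f σ k '' Set.univ := by
    intro σ k
    have h : π σ ∈ ⋂ k : ℕ, seqComp f σ k '' Set.univ := by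
      rw [hπ σ]; exact rfl
    exact Set.mem_iInter.1 h k
  -- the attractor is forward invariant under each f i
  have famaps : ∀ i : Fin N, ∀ a ∈ Set.range π, f i a ∈ Set.range π := by
    intro i a ha
    obtain ⟨σ, rfl⟩ := ha
    have key : f i (π σ) ∈
        ⋂ k : ℕ, seqComp f (fun n => Nat.casesOn n i σ) k '' Set.univ := by
      apply Set.mem_iInter.2
      intro k
      cases k with
      | zero => exact ⟨f i (π σ), trivial, rfl⟩
      | succ k =>
        rw [seqComp_succ']
        obtain ⟨w, _, hw⟩ := πmem σ k
        refine ⟨w, trivial, ?_⟩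
        show f i (seqComp f σ k w) = f i (π σ)
        rw [hw]
    rw [hπ] at key
    exact ⟨_, key.symm⟩
  -- itineraries are unique
  have uniq : ∀ {i j : Fin N} {z : X}, z ∈ M i → z ∈ M j → i = j := by
    intro i j z hi hj
    by_contra h
    exact Set.disjoint_left.1 (hMdisj i j h) hi hj
  -- T maps the attractor into itself
  have Tmaps : ∀ a ∈ Set.range π, T a ∈ Set.range π := by
    intro a ha
    rw [← hMcover] at ha
    obtain ⟨i, hi⟩ := Set.mem_iUnion.1 ha
    obtain ⟨b, hb, hfb⟩ := hMsub i hi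
    have : f i (T a) = f i b := by rw [hT i a hi, hfb]
    exact hinj i this ▸ hb
  have Titer : ∀ k : ℕ, ∀ a ∈ Set.range π, T^[k] a ∈ Set.range π := by
    intro k
    induction k with
    | zero => intro a ha; simpa using ha
    | succ k ih =>
      intro a ha
      rw [Function.iterate_succ_apply']
      exact Tmaps _ (ih a ha)
  -- T is continuous within each mask piece
  have Tcont : ∀ i : Fin N, ∀ z ∈ M i, ContinuousWithinAt T (M i) z := by
    intro i z hz
    rw [ContinuousWithinAt, Filter.tendsto_def]
    intro s hs
    obtain ⟨V, hVsub, hVopen, hTzV⟩ := mem_nhds_iff.1 hs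
    have hz' : z ∈ f i '' V := ⟨T z, hTzV, hT i z hz⟩
    apply mem_nhdsWithin.2 ⟨f i '' V, hopen i V hVopen, hz', ?_⟩
    rintro w ⟨⟨v, hvV, hvw⟩, hwM⟩
    have hfw : f i (T w) = f i v := by rw [hT i w hwM, hvw]
    have : T w = v := hinj i hfw
    exact hVsub (this ▸ hvV)
  -- the itinerary of T y is the shift of the itinerary of y
  have itinshift : ∀ y ∈ Set.range π, ∀ j : ℕ, itin (T y) j = itin y (j + 1) := by
    intro y hy j
    have h1 : T^[j] (T y) ∈ M (itin (T y) j) := hitin (T y) (Tmaps y hy) j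
    have h2 : T^[j] (T y) ∈ M (itin y (j + 1)) := by
      have := hitin y hy (j + 1)
      rwa [Function.iterate_succ_apply] at this
    exact uniq h1 h2
  -- seqComp along the itinerary inverts the iterates of T
  have Fback : ∀ k : ℕ, seqComp f (itin x) k (T^[k] x) = x := by
    intro k
    induction k with
    | zero => rfl
    | succ k ih =>
      show seqComp f (itin x) k (f (itin x k) (T^[k + 1] x)) = x
      rw [Function.iterate_succ_apply']
      rw [hT (itin x k) (T^[k] x) (hitin x hx k)]
      exact ih
  -- seqComp maps the attractor into itself
  have seqmaps : ∀ (σ : ℕ → Fin N) (k : ℕ), ∀ a ∈ Set.range π,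
      seqComp f σ k a ∈ Set.range π := by
    intro σ k
    induction k with
    | zero => intro a ha; exact ha
    | succ k ih =>
      intro a ha
      exact ih (f (σ k) a) (famaps (σ k) a ha)
  -- recovering z from y = seqComp f σ k z when itineraries agree
  have Tforward : ∀ (k : ℕ) (σ : ℕ → Fin N) (y : X), y ∈ Set.range π → ∀ z : X,
      (∀ j < k, itin y j = σ j) → y = seqComp f σ k z → T^[k] y = z := by
    intro k
    induction k with
    | zero => intro σ y _ z _ hz; exact hz
    | succ k ih =>
      intro σ y hy z hagree hz
      rw [seqComp_succ'] at hz
      simp only [Function.comp_apply] at hz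
      have hy0 : y ∈ M (σ 0) := by
        have := hitin y hy 0
        rwa [Function.iterate_zero_apply, hagree 0 (Nat.succ_pos k)] at this
      have hTy : T y = seqComp f (fun n => σ (n + 1)) k z := by
        apply hinj (σ 0)
        rw [hT (σ 0) y hy0]
        exact hz
      have hag' : ∀ j < k, itin (T y) j = σ (j + 1) := fun j hj => by
        rw [itinshift y hy j, hagree (j + 1) (Nat.succ_lt_succ hj)]
      have := ih (fun n => σ (n + 1)) (T y) (Tmaps y hy) z hag' hTy
      rw [Function.iterate_succ_apply]
      exact this
  -- coordinatewise criterion for continuity of itin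
  have coordIff : ContinuousWithinAt itin (Set.range π) x ↔
      ∀ k : ℕ, ∀ᶠ y in 𝓝[Set.range π] x, itin y k = itin x k := by
    rw [continuousWithinAt_pi]
    refine forall_congr' fun k => ?_
    constructor
    · intro h
      exact h (by rw [nhds_discrete]; exact rfl : {itin x k} ∈ 𝓝 (itin x k))
    · intro h
      rw [ContinuousWithinAt, nhds_discrete, Filter.tendsto_pure]
      exact h
  constructor
  · -- continuity ⇒ relative interior condition
    intro hc k
    have hev : ∀ᶠ y in 𝓝[Set.range π] x, ∀ j ≤ k, itin y j = itin x j := by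
      have h1 : ∀ j : Fin (k + 1), ∀ᶠ y in 𝓝[Set.range π] x,
          itin y (j : ℕ) = itin x (j : ℕ) := fun j => coordIff.1 hc j
      filter_upwards [Filter.eventually_all.2 h1] with y hy j hj
      exact hy ⟨j, Nat.lt_succ_of_le hj⟩
    obtain ⟨V, hVopen, hxV, hVsub⟩ := mem_nhdsWithin.1 hev
    refine ⟨seqComp f (itin x) k ⁻¹' V,
      (seqComp_continuous hf (itin x) k).isOpen_preimage V hVopen, ?_, ?_⟩
    · show seqComp f (itin x) k (T^[k] x) ∈ V
      rw [Fback k]; exact hxV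
    · rintro z ⟨hzU, hzA⟩
      set y := seqComp f (itin x) k z with hy
      have hyA : y ∈ Set.range π := seqmaps (itin x) k z hzA
      have hagree : ∀ j ≤ k, itin y j = itin x j := hVsub ⟨hzU, hyA⟩
      have hTk : T^[k] y = z :=
        Tforward k (itin x) y hyA z (fun j hj => hagree j hj.le) hy
      have := hitin y hyA k
      rw [hTk, hagree k le_rfl] at this
      exact this
  · -- relative interior condition ⇒ continuity
    intro h
    rw [coordIff]
    have Q : ∀ j : ℕ, ContinuousWithinAt (fun y => T^[j] y) (Set.range π) x ∧
        ∀ᶠ y in 𝓝[Set.range π] x, T^[j] y ∈ M (itin x j) := by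
      intro j
      induction j with
      | zero =>
        refine ⟨continuousWithinAt_id, ?_⟩
        obtain ⟨U, hUopen, hxU, hUsub⟩ := h 0
        rw [Function.iterate_zero_apply] at hxU
        filter_upwards [self_mem_nhdsWithin,
          nhdsWithin_le_nhds (hUopen.mem_nhds hxU)] with y hyA hyU
        simpa using hUsub ⟨hyU, hyA⟩
      | succ j ih =>
        obtain ⟨hcont, hev⟩ := ih
        have hx_j : T^[j] x ∈ M (itin x j) := hitin x hx j
        have hTc : ContinuousWithinAt T (M (itin x j)) (T^[j] x) :=
          Tcont (itin x j) _ hx_j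
        have hten : Filter.Tendsto (fun y => T^[j] y) (𝓝[Set.range π] x)
            (𝓝[M (itin x j)] (T^[j] x)) :=
          tendsto_nhdsWithin_iff.2 ⟨hcont, hev⟩
        have hcont' : ContinuousWithinAt (fun y => T^[j + 1] y) (Set.range π) x := by
          have hcomp := hTc.tendsto.comp hten
          rw [ContinuousWithinAt]
          rw [show T^[j + 1] x = T (T^[j] x) from Function.iterate_succ_apply' T j x]
          convert hcomp using 1
          funext y
          exact Function.iterate_succ_apply' T j y
        refine ⟨hcont', ?_⟩
        obtain ⟨U, hUopen, hxU, hUsub⟩ := h (j + 1)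
        have h1 : ∀ᶠ y in 𝓝[Set.range π] x, T^[j + 1] y ∈ U :=
          hcont' (hUopen.mem_nhds hxU)
        filter_upwards [h1, self_mem_nhdsWithin] with y hyU hyA
        exact hUsub ⟨hyU, Titer (j + 1) y hyA⟩
    intro k
    filter_upwards [(Q k).2, self_mem_nhdsWithin] with y h1 h2
    exact uniq (hitin y h2 k) h1
end
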